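/- arXiv:1502.01316 — 4 statements merged into one kernel-verified Lean document; each statement's English description precedes it below -/
import Mathlib

section
/- Let m, n ≥ 2 with m ≠ n, let α, β be real numbers, and consider the (m+n)×(m+n) symmetric block matrix H = [[nα·I_m, β·Bᵀ],[β·B, mα·I_n]], where B is the n×m all-ones matrix. Then all eigenvalues of H are positive if and only if α + β > 0 and α − β > 0. -/
/-!
For `x = (u, v)` the quadratic form of `H` is `nα‖u‖² + mα‖v‖² + 2β (∑ u)(∑ v)`, and `H` has
positive eigenvalues iff this form is positive definite. Testing it on `(1, ±1)` gives
`2mn(α ± β) > 0`. Conversely, Cauchy–Schwarz (`(∑ u)² ≤ m‖u‖²`, `(∑ v)² ≤ n‖v‖²`) and AM–GM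
bound the cross term by `|β|(n‖u‖² + m‖v‖²)`, so the form is at least
`(α - |β|)(n‖u‖² + m‖v‖²)`.
-/

open Matrix

lemma abs_two_mul_mul_le {S T U W a b : ℝ} (ha : 0 ≤ a) (hb : 0 ≤ b) (hU : 0 ≤ U)
    (hW : 0 ≤ W) (hS : S ^ 2 ≤ a * U) (hT : T ^ 2 ≤ b * W) : |2 * (S * T)| ≤ b * U + a * W := by
  refine abs_le_of_sq_le_sq ?_ (by positivity)
  -- `(2ST)² ≤ 4 (bU)(aW) ≤ (bU + aW)²`
  nlinarith [mul_le_mul hS hT (sq_nonneg T) (by positivity), sq_nonneg (b * U - a * W)]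

section

variable {ι κ : Type*} [Fintype ι]

lemma mulVec_eq_sum_smul_one_of_forall_eq_one {B : Matrix κ ι ℝ} (hB : ∀ i j, B i j = 1)
    (u : ι → ℝ) : B *ᵥ u = (∑ i, u i) • 1 := by
  ext; simp [mulVec, dotProduct, hB]

lemma sq_sum_le_card_mul_dotProduct_self (u : ι → ℝ) :
    (∑ i, u i) ^ 2 ≤ Fintype.card ι * (u ⬝ᵥ u) := by
  simpa [dotProduct, sq] using sq_sum_le_card_mul_sum_sq (s := Finset.univ) (f := u)

variable [Fintype κ] [DecidableEq ι] [DecidableEq κ] {B : Matrix κ ι ℝ}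

lemma dotProduct_fromBlocks_allOnes_mulVec (a b β : ℝ) (hB : ∀ i j, B i j = 1)
    (u : ι → ℝ) (v : κ → ℝ) :
    Sum.elim u v ⬝ᵥ fromBlocks (a • 1) (β • Bᵀ) (β • B) (b • 1) *ᵥ Sum.elim u v =
      a * (u ⬝ᵥ u) + b * (v ⬝ᵥ v) + 2 * β * ((∑ i, u i) * ∑ j, v j) := by
  simp only [fromBlocks_mulVec, Sum.elim_comp_inl, Sum.elim_comp_inr, smul_mulVec, one_mulVec,
    mulVec_eq_sum_smul_one_of_forall_eq_one hB,
    mulVec_eq_sum_smul_one_of_forall_eq_one (B := Bᵀ) fun j i => hB i j,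
    sumElim_dotProduct_sumElim, dotProduct_add, dotProduct_smul, dotProduct_one, smul_eq_mul]
  ring

local notation "m" => (Fintype.card ι : ℝ)
local notation "n" => (Fintype.card κ : ℝ)

lemma dotProduct_fromBlocks_allOnes_mulVec_sumElim_one (α β s : ℝ) (hB : ∀ i j, B i j = 1) :
    Sum.elim 1 (s • 1) ⬝ᵥ
        fromBlocks ((n * α) • 1) (β • Bᵀ) (β • B) ((m * α) • 1) *ᵥ Sum.elim 1 (s • 1) =
      m * n * ((1 + s ^ 2) * α + 2 * s * β) := by
  rw [dotProduct_fromBlocks_allOnes_mulVec _ _ _ hB]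
  simp [dotProduct]
  ring

lemma add_pos_and_sub_pos_of_posDef_fromBlocks_allOnes [Nonempty ι] [Nonempty κ] {α β : ℝ}
    (hB : ∀ i j, B i j = 1)
    (hH : (fromBlocks ((n * α) • 1) (β • Bᵀ) (β • B) ((m * α) • 1)).PosDef) :
    0 < α + β ∧ 0 < α - β := by
  have hmn : 0 < m * n := by positivity
  have hpos (s : ℝ) : 0 < m * n * ((1 + s ^ 2) * α + 2 * s * β) := by
    rw [← dotProduct_fromBlocks_allOnes_mulVec_sumElim_one α β s hB]
    simpa using hH.dotProduct_mulVec_pos (x := Sum.elim 1 (s • 1)) fun h => by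
      simpa using congr_fun h (Sum.inl (Classical.arbitrary ι))
  have h₁ := pos_of_mul_pos_right (hpos 1) hmn.le
  have h₂ := pos_of_mul_pos_right (hpos (-1)) hmn.le
  constructor <;> linarith

lemma posDef_fromBlocks_allOnes_of_abs_lt [Nonempty ι] [Nonempty κ] {α β : ℝ}
    (hB : ∀ i j, B i j = 1) (hβα : |β| < α) :
    (fromBlocks ((n * α) • 1) (β • Bᵀ) (β • B) ((m * α) • 1)).PosDef := by
  refine .of_dotProduct_mulVec_pos (.fromBlocks (by simp) (by simp) (by simp)) fun x hx => ?_
  rw [← Sum.elim_comp_inl_inr x] at hx ⊢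
  set u := x ∘ Sum.inl
  set v := x ∘ Sum.inr
  rw [star_trivial, dotProduct_fromBlocks_allOnes_mulVec _ _ _ hB]
  have hU : 0 ≤ u ⬝ᵥ u := by simpa using dotProduct_star_self_nonneg u
  have hW : 0 ≤ v ⬝ᵥ v := by simpa using dotProduct_star_self_nonneg v
  have hUW : 0 < u ⬝ᵥ u + v ⬝ᵥ v := by
    simpa [sumElim_dotProduct_sumElim] using dotProduct_star_self_pos_iff.2 hx
  have hm : 1 ≤ m := by exact_mod_cast Fintype.card_pos
  have hn : 1 ≤ n := by exact_mod_cast Fintype.card_pos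
  have hcross := abs_two_mul_mul_le (by positivity) (by positivity) hU hW
    (sq_sum_le_card_mul_dotProduct_self u) (sq_sum_le_card_mul_dotProduct_self v)
  have hβ : -(|β| * (n * (u ⬝ᵥ u) + m * (v ⬝ᵥ v))) ≤ 2 * β * ((∑ i, u i) * ∑ j, v j) := by
    have := neg_abs_le (β * (2 * ((∑ i, u i) * ∑ j, v j)))
    rw [abs_mul] at this
    linarith [mul_le_mul_of_nonneg_left hcross (abs_nonneg β)]
  nlinarith [mul_pos (sub_pos.2 hβα) (show 0 < n * (u ⬝ᵥ u) + m * (v ⬝ᵥ v) by nlinarith)]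

theorem posDef_fromBlocks_allOnes_iff [Nonempty ι] [Nonempty κ] {α β : ℝ}
    (hB : ∀ i j, B i j = 1) :
    (fromBlocks ((n * α) • 1) (β • Bᵀ) (β • B) ((m * α) • 1)).PosDef ↔
      0 < α + β ∧ 0 < α - β :=
  ⟨add_pos_and_sub_pos_of_posDef_fromBlocks_allOnes hB, fun ⟨h₁, h₂⟩ =>
    posDef_fromBlocks_allOnes_of_abs_lt hB (abs_lt.2 ⟨by linarith, by linarith⟩)⟩

end

theorem stmt6_general (m n : ℕ) (hm : 2 ≤ m) (hn : 2 ≤ n) (α β : ℝ)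
    (B : Matrix (Fin n) (Fin m) ℝ) (hB : ∀ i j, B i j = 1)
    (H : Matrix (Fin m ⊕ Fin n) (Fin m ⊕ Fin n) ℝ)
    (hH : H = Matrix.fromBlocks (((n : ℝ) * α) • (1 : Matrix (Fin m) (Fin m) ℝ))
      (β • Bᵀ) (β • B) (((m : ℝ) * α) • (1 : Matrix (Fin n) (Fin n) ℝ)))
    (hHsym : H.IsHermitian) :
    (∀ i, 0 < hHsym.eigenvalues i) ↔ (0 < α + β ∧ 0 < α - β) := by
  have : Nonempty (Fin m) := ⟨⟨0, by omega⟩⟩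
  have : Nonempty (Fin n) := ⟨⟨0, by omega⟩⟩
  subst hH
  rw [← hHsym.posDef_iff_eigenvalues_pos]
  simpa using posDef_fromBlocks_allOnes_iff (ι := Fin m) (κ := Fin n) hB

/-- For `m, n ≥ 2` with `m ≠ n` and `B` the `n×m` all-ones matrix, all eigenvalues
of the symmetric block matrix `H = [[nα·I_m, β·Bᵀ],[β·B, mα·I_n]]` are positive if
and only if `α + β > 0` and `α − β > 0`. -/
theorem stmt6 (m n : ℕ) (hm : 2 ≤ m) (hn : 2 ≤ n) (hmn : m ≠ n) (α β : ℝ)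
    (B : Matrix (Fin n) (Fin m) ℝ) (hB : ∀ i j, B i j = 1)
    (H : Matrix (Fin m ⊕ Fin n) (Fin m ⊕ Fin n) ℝ)
    (hH : H = Matrix.fromBlocks (((n : ℝ) * α) • (1 : Matrix (Fin m) (Fin m) ℝ))
      (β • Bᵀ) (β • B) (((m : ℝ) * α) • (1 : Matrix (Fin n) (Fin n) ℝ)))
    (hHsym : H.IsHermitian) :
    (∀ i, 0 < hHsym.eigenvalues i) ↔ (0 < α + β ∧ 0 < α - β) :=
  stmt6_general m n hm hn α β B hB H hH hHsym
end

section
/- Let G be a finite d-regular bipartite graph with parts V₁, V₂ each of size m, and adjacency matrix in block form A = [[0, Cᵀ],[C, 0]] for an m×m matrix C. Let α, β, γ be real numbers and H = [[dα·I_m, β·Cᵀ],[β·C, dγ·I_m]]. Then all eigenvalues of H are positive if and only if α > 0 and αγ − β² > 0. -/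
/-!
Write a vector as `x = (u, v)` along the two sides. Since every row and every column of `C`
sums to `d`, the quadratic form of `H` splits over the entries of `C`:
`xᵀ H x = ∑ i j, C i j * (α (u j)² + 2β (u j) (v i) + γ (v i)²)`.
Constant vectors `u = a, v = b` turn this into `d m (α a² + 2β a b + γ b²)`, and conversely, as
`C ≥ 0` and each row and column of `C` has a positive entry, a nonzero `x` makes some summand
positive. Hence `H` is positive definite exactly when the binary form `α a² + 2β a b + γ b²` is,
i.e. when `α > 0` and `αγ - β² > 0`.
-/

open Matrix

def binaryForm (α β γ x y : ℝ) : ℝ := α * x ^ 2 + 2 * β * x * y + γ * y ^ 2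

theorem binaryForm_pos_iff {α β γ : ℝ} :
    (∀ x y, x ≠ 0 ∨ y ≠ 0 → 0 < binaryForm α β γ x y) ↔ 0 < α ∧ 0 < α * γ - β ^ 2 := by
  constructor
  · intro h
    have hα : 0 < α := by simpa [binaryForm] using h 1 0 (.inl one_ne_zero)
    refine ⟨hα, pos_of_mul_pos_right (a := α) ?_ hα.le⟩
    -- the binary form at `(β, -α)` equals `α (αγ - β²)`
    have := h β (-α) (.inr (neg_ne_zero.mpr hα.ne'))
    unfold binaryForm at this
    linarith
  · rintro ⟨hα, hδ⟩ x y hxy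
    have hsq : α * binaryForm α β γ x y = (α * x + β * y) ^ 2 + (α * γ - β ^ 2) * y ^ 2 := by
      unfold binaryForm; ring
    refine pos_of_mul_pos_right (a := α) ?_ hα.le
    rcases eq_or_ne y 0 with rfl | hy
    · have hx : x ≠ 0 := hxy.resolve_right (not_not.mpr rfl)
      rw [hsq]; simp only [zero_pow two_ne_zero, mul_zero, add_zero]; positivity
    · rw [hsq]; positivity

theorem binaryForm_nonneg {α β γ : ℝ} (h : ∀ x y, x ≠ 0 ∨ y ≠ 0 → 0 < binaryForm α β γ x y)
    (x y : ℝ) : 0 ≤ binaryForm α β γ x y := by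
  by_cases hxy : x ≠ 0 ∨ y ≠ 0
  · exact (h x y hxy).le
  · obtain ⟨rfl, rfl⟩ : x = 0 ∧ y = 0 := by tauto
    simp [binaryForm]

section BlockForm

variable {m n : Type*} [Fintype m] [Fintype n] [DecidableEq m] [DecidableEq n]
  {C : Matrix n m ℝ} {d : ℝ}

theorem sumElim_dotProduct_fromBlocks_mulVec_sumElim (hrow : ∀ i, ∑ j, C i j = d)
    (hcol : ∀ j, ∑ i, C i j = d) (α β γ : ℝ) (u : m → ℝ) (v : n → ℝ) :
    Sum.elim u v ⬝ᵥ fromBlocks ((d * α) • 1) (β • Cᵀ) (β • C) ((d * γ) • 1) *ᵥ Sum.elim u v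
      = ∑ i, ∑ j, C i j * binaryForm α β γ (u j) (v i) := by
  have hu : ∑ i, ∑ j, C i j * (α * u j ^ 2) = d * α * (u ⬝ᵥ u) := by
    rw [Finset.sum_comm]
    simp only [dotProduct, Finset.mul_sum, ← Finset.sum_mul, hcol]
    exact Finset.sum_congr rfl fun j _ => by ring
  have hv : ∑ i, ∑ j, C i j * (γ * v i ^ 2) = d * γ * (v ⬝ᵥ v) := by
    simp only [dotProduct, Finset.mul_sum, ← Finset.sum_mul, hrow]
    exact Finset.sum_congr rfl fun i _ => by ring
  have huv : ∑ i, ∑ j, C i j * (2 * β * u j * v i) = 2 * β * (v ⬝ᵥ C *ᵥ u) := by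
    simp only [dotProduct, mulVec, Finset.mul_sum]
    exact Finset.sum_congr rfl fun i _ => Finset.sum_congr rfl fun j _ => by ring
  have hCt : u ⬝ᵥ Cᵀ *ᵥ v = v ⬝ᵥ C *ᵥ u := by
    rw [dotProduct_mulVec, vecMul_transpose, dotProduct_comm]
  simp only [binaryForm, mul_add, Finset.sum_add_distrib, hu, hv, huv]
  rw [fromBlocks_mulVec, sumElim_dotProduct_sumElim]
  simp only [Sum.elim_comp_inl, Sum.elim_comp_inr, dotProduct_add, smul_mulVec, one_mulVec,
    dotProduct_smul, smul_eq_mul, hCt]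
  ring

theorem exists_pos_of_sum_pos {ι : Type*} [Fintype ι] {f : ι → ℝ} (hf : 0 < ∑ i, f i) :
    ∃ i, 0 < f i := by
  obtain ⟨i, -, hi⟩ := Finset.exists_lt_of_sum_lt (f := 0) (g := f) (by simpa using hf)
  exact ⟨i, hi⟩

theorem posDef_fromBlocks_iff [Nonempty m] [Nonempty n] (hd : 0 < d) (hC : ∀ i j, 0 ≤ C i j)
    (hrow : ∀ i, ∑ j, C i j = d) (hcol : ∀ j, ∑ i, C i j = d) (α β γ : ℝ) :
    (fromBlocks ((d * α) • 1) (β • Cᵀ) (β • C) ((d * γ) • 1)).PosDef ↔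
      0 < α ∧ 0 < α * γ - β ^ 2 := by
  have hherm : (fromBlocks ((d * α) • (1 : Matrix m m ℝ)) (β • Cᵀ) (β • C)
      ((d * γ) • 1)).IsHermitian :=
    IsHermitian.fromBlocks (by simp [IsHermitian]) (by simp) (by simp [IsHermitian])
  rw [← binaryForm_pos_iff, posDef_iff_dotProduct_mulVec, and_iff_right hherm]
  simp only [star_trivial]
  constructor
  · intro hpos x y hxy
    have hne : Sum.elim (fun _ : m ↦ x) (fun _ : n ↦ y) ≠ 0 := by
      intro h
      rcases hxy with hx | hy
      · exact hx (congr_fun h (.inl (Classical.arbitrary m)))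
      · exact hy (congr_fun h (.inr (Classical.arbitrary n)))
    have hq := hpos hne
    simp only [sumElim_dotProduct_fromBlocks_mulVec_sumElim hrow hcol, ← Finset.sum_mul, hrow,
      Finset.sum_const, Finset.card_univ, nsmul_eq_mul] at hq
    exact pos_of_mul_pos_right hq (by positivity)
  · intro hφ x hx
    have hterm : ∀ i j, 0 ≤ C i j * binaryForm α β γ (x (.inl j)) (x (.inr i)) :=
      fun i j ↦ mul_nonneg (hC i j) (binaryForm_nonneg hφ _ _)
    suffices ∃ i j, 0 < C i j * binaryForm α β γ (x (.inl j)) (x (.inr i)) by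
      obtain ⟨i, j, hij⟩ := this
      rw [← Sum.elim_comp_inl_inr x, sumElim_dotProduct_fromBlocks_mulVec_sumElim hrow hcol]
      refine Finset.sum_pos' (fun i _ ↦ Finset.sum_nonneg fun j _ ↦ hterm i j) ⟨i, by simp, ?_⟩
      exact Finset.sum_pos' (fun j _ ↦ hterm i j) ⟨j, by simp, hij⟩
    obtain ⟨k, hk⟩ := Function.ne_iff.mp hx
    rcases k with j | i
    · obtain ⟨i, hij⟩ := exists_pos_of_sum_pos (hcol j ▸ hd)
      exact ⟨i, j, mul_pos hij (hφ _ _ (.inl hk))⟩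
    · obtain ⟨j, hij⟩ := exists_pos_of_sum_pos (hrow i ▸ hd)
      exact ⟨i, j, mul_pos hij (hφ _ _ (.inr hk))⟩

end BlockForm

section Bipartite

variable {m n : Type*} {G : SimpleGraph (m ⊕ n)} [DecidableRel G.Adj] {C : Matrix n m ℝ}

theorem nonneg_of_adjMatrix_eq_fromBlocks (hadj : G.adjMatrix ℝ = fromBlocks 0 Cᵀ C 0)
    (i : n) (j : m) : 0 ≤ C i j := by
  have hC : C i j = G.adjMatrix ℝ (.inr i) (.inl j) := by rw [hadj]; rfl
  rw [hC, SimpleGraph.adjMatrix_apply]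
  split_ifs <;> norm_num

variable [Fintype m] [Fintype n]

theorem sum_row_eq_of_adjMatrix_eq_fromBlocks {d : ℕ} (hreg : G.IsRegularOfDegree d)
    (hadj : G.adjMatrix ℝ = fromBlocks 0 Cᵀ C 0) (i : n) : ∑ j, C i j = d := by
  have hdeg := G.adjMatrix_mulVec_const_apply_of_regular (α := ℝ) (a := 1) hreg (v := .inr i)
  rw [hadj, fromBlocks_mulVec] at hdeg
  simpa [mulVec, dotProduct] using hdeg

theorem sum_col_eq_of_adjMatrix_eq_fromBlocks {d : ℕ} (hreg : G.IsRegularOfDegree d)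
    (hadj : G.adjMatrix ℝ = fromBlocks 0 Cᵀ C 0) (j : m) : ∑ i, C i j = d := by
  have hdeg := G.adjMatrix_mulVec_const_apply_of_regular (α := ℝ) (a := 1) hreg (v := .inl j)
  rw [hadj, fromBlocks_mulVec] at hdeg
  simpa [mulVec, dotProduct] using hdeg

end Bipartite

theorem stmt7_general (m d : ℕ) (hm : 1 ≤ m) (hd : 0 < d)
    (G : SimpleGraph (Fin m ⊕ Fin m)) [DecidableRel G.Adj]
    (hreg : G.IsRegularOfDegree d)
    (C : Matrix (Fin m) (Fin m) ℝ)
    (hadj : G.adjMatrix ℝ = Matrix.fromBlocks 0 Cᵀ C 0)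
    (α β γ : ℝ)
    (H : Matrix (Fin m ⊕ Fin m) (Fin m ⊕ Fin m) ℝ)
    (hH : H = Matrix.fromBlocks (((d : ℝ) * α) • (1 : Matrix (Fin m) (Fin m) ℝ))
      (β • Cᵀ) (β • C) (((d : ℝ) * γ) • (1 : Matrix (Fin m) (Fin m) ℝ)))
    (hHsym : H.IsHermitian) :
    (∀ i, 0 < hHsym.eigenvalues i) ↔ (0 < α ∧ 0 < α * γ - β ^ 2) := by
  have : Nonempty (Fin m) := ⟨⟨0, hm⟩⟩
  rw [← hHsym.posDef_iff_eigenvalues_pos, hH]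
  exact posDef_fromBlocks_iff (Nat.cast_pos.mpr hd) (nonneg_of_adjMatrix_eq_fromBlocks hadj)
    (sum_row_eq_of_adjMatrix_eq_fromBlocks hreg hadj)
    (sum_col_eq_of_adjMatrix_eq_fromBlocks hreg hadj) α β γ

/-- Let `G` be a `(d,m)`-graph (a connected `d`-regular bipartite graph with both
parts of size `m`) whose adjacency matrix has block form `A = [[0, Cᵀ],[C, 0]]`.
All eigenvalues of `H = [[dα·I_m, β·Cᵀ],[β·C, dγ·I_m]]` are positive if and only
if `α > 0` and `αγ − β² > 0`. -/
theorem stmt7 (m d : ℕ) (hm : 1 ≤ m) (hd : 0 < d)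
    (G : SimpleGraph (Fin m ⊕ Fin m)) [DecidableRel G.Adj]
    (hconn : G.Connected) (hreg : G.IsRegularOfDegree d)
    (C : Matrix (Fin m) (Fin m) ℝ)
    (hadj : G.adjMatrix ℝ = Matrix.fromBlocks 0 Cᵀ C 0)
    (α β γ : ℝ)
    (H : Matrix (Fin m ⊕ Fin m) (Fin m ⊕ Fin m) ℝ)
    (hH : H = Matrix.fromBlocks (((d : ℝ) * α) • (1 : Matrix (Fin m) (Fin m) ℝ))
      (β • Cᵀ) (β • C) (((d : ℝ) * γ) • (1 : Matrix (Fin m) (Fin m) ℝ)))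
    (hHsym : H.IsHermitian) :
    (∀ i, 0 < hHsym.eigenvalues i) ↔ (0 < α ∧ 0 < α * γ - β ^ 2) :=
  stmt7_general m d hm hd G hreg C hadj α β γ H hH hHsym
end

section
/- Let G = (V, E) be a finite connected graph, φ : ℝ² → ℝ a smooth function, and f(x) = Σ_{(u,v)∈E} φ(x_u, x_v) (each undirected edge counted once with some fixed orientation). Suppose x₀, y₀ ∈ ℝ with x₀ ≠ y₀, ∂φ/∂x(x₀,x₀) ≠ 0, ∂φ/∂x(y₀,y₀) ≠ 0, and φ is invariant under swapping its two arguments, and ∇φ(x₀,y₀) = 0. If x̄ ∈ ℝ^V has every coordinate equal to x₀ or y₀ and ∇f(x̄) = 0, then the map assigning to each vertex its value (x₀ or y₀) is a proper 2-coloring of G; in particular G is bipartite, with V₁ = {v : x̄_v = x₀} and V₂ = {v : x̄_v = y₀}. -/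
open Finset

/-- Let `G` be a finite connected graph, `φ : ℝ² → ℝ` smooth and symmetric, and
`f(x) = Σ_{(u,v)∈E} φ(x_u, x_v)` (each undirected edge counted once; since `φ` is
symmetric this equals half the sum over ordered adjacent pairs). Suppose
`x₀ ≠ y₀`, `∂φ/∂x(x₀,x₀) ≠ 0`, `∂φ/∂x(y₀,y₀) ≠ 0` and `∇φ(x₀,y₀) = 0`. If
`x̄ ∈ ℝ^V` has every coordinate equal to `x₀` or `y₀` and `∇f(x̄) = 0`, then the
assignment of values is a proper 2-coloring of `G`; in particular `G` is
bipartite. -/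
theorem stmt9 {V : Type*} [Fintype V] [DecidableEq V] (G : SimpleGraph V)
    [DecidableRel G.Adj] (hconn : G.Connected)
    (φ : ℝ × ℝ → ℝ) (hφ : ContDiff ℝ (⊤ : ℕ∞) φ)
    (hsymm : ∀ a b : ℝ, φ (a, b) = φ (b, a))
    (f : (V → ℝ) → ℝ)
    (hf : f = fun x => (1 / 2) * ∑ u : V, ∑ v ∈ G.neighborFinset u, φ (x u, x v))
    (x₀ y₀ : ℝ) (hxy : x₀ ≠ y₀)
    (hx₀ : fderiv ℝ φ (x₀, x₀) (1, 0) ≠ 0)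
    (hy₀ : fderiv ℝ φ (y₀, y₀) (1, 0) ≠ 0)
    (hcrit : fderiv ℝ φ (x₀, y₀) = 0)
    (xb : V → ℝ) (hval : ∀ v, xb v = x₀ ∨ xb v = y₀)
    (hgrad : fderiv ℝ f xb = 0) :
    (∀ u v, G.Adj u v → xb u ≠ xb v) ∧ G.Colorable 2 := by
  classical
  have hφd : Differentiable ℝ φ := hφ.differentiable (by simp)
  -- swap lemma for the derivative
  have hswap : ∀ (a b s t : ℝ),
      fderiv ℝ φ (a, b) (s, t) = fderiv ℝ φ (b, a) (t, s) := by
    intro a b s t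
    have h1 : HasFDerivAt (φ ∘ (⇑(ContinuousLinearEquiv.prodComm ℝ ℝ ℝ)))
        ((fderiv ℝ φ (b, a)).comp
          ((ContinuousLinearEquiv.prodComm ℝ ℝ ℝ) : (ℝ × ℝ) →L[ℝ] (ℝ × ℝ))) (a, b) := by
      exact (hφd (b, a)).hasFDerivAt.comp (a, b)
        ((ContinuousLinearEquiv.prodComm ℝ ℝ ℝ).hasFDerivAt)
    have h2 : φ ∘ (⇑(ContinuousLinearEquiv.prodComm ℝ ℝ ℝ)) = φ := by
      funext q
      exact hsymm q.2 q.1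
    rw [h2] at h1
    rw [h1.fderiv]
    rfl
  -- derivative of f
  set L : V → V → ((V → ℝ) →L[ℝ] ℝ × ℝ) := fun u v =>
    (ContinuousLinearMap.proj u).prod (ContinuousLinearMap.proj v) with hL
  have hterm : ∀ u v : V, HasFDerivAt (fun x : V → ℝ => φ (x u, x v))
      ((fderiv ℝ φ (xb u, xb v)).comp (L u v)) xb := by
    intro u v
    have h2 : HasFDerivAt φ (fderiv ℝ φ (xb u, xb v)) ((L u v) xb) :=
      (hφd _).hasFDerivAt
    exact h2.comp xb ((L u v).hasFDerivAt)
  have hF : HasFDerivAt f ((1 / 2 : ℝ) • ∑ u : V, ∑ v ∈ G.neighborFinset u,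
      (fderiv ℝ φ (xb u, xb v)).comp (L u v)) xb := by
    rw [hf]
    exact (HasFDerivAt.fun_sum (fun u _ =>
      HasFDerivAt.fun_sum (fun v _ => hterm u v))).const_mul (1 / 2 : ℝ)
  have hD := hF.fderiv
  rw [hgrad] at hD
  -- key identity at each vertex
  have hkey : ∀ j : V,
      ∑ v ∈ G.neighborFinset j, fderiv ℝ φ (xb j, xb v) (1, 0) = 0 := by
    intro j
    have h0 : ((1 / 2 : ℝ) • ∑ u : V, ∑ v ∈ G.neighborFinset u,
        (fderiv ℝ φ (xb u, xb v)).comp (L u v)) (Pi.single j (1 : ℝ)) = 0 := by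
      rw [← hD]; rfl
    have hlin : ∀ (D : (ℝ × ℝ) →L[ℝ] ℝ) (s t : ℝ),
        D (s, t) = s * D (1, 0) + t * D (0, 1) := by
      intro D s t
      have h : (s, t) = s • ((1 : ℝ), (0 : ℝ)) + t • ((0 : ℝ), (1 : ℝ)) := by
        simp [Prod.ext_iff]
      rw [h, map_add, map_smul, map_smul, smul_eq_mul, smul_eq_mul]
    simp only [ContinuousLinearMap.smul_apply, ContinuousLinearMap.sum_apply,
      ContinuousLinearMap.comp_apply, hL, ContinuousLinearMap.prod_apply,
      ContinuousLinearMap.proj_apply, smul_eq_mul] at h0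
    have hsingle : ∀ u : V, (Pi.single j (1 : ℝ) : V → ℝ) u = if u = j then 1 else 0 := by
      intro u; rw [Pi.single_apply]
    have h1 : ∑ u : V, ∑ v ∈ G.neighborFinset u,
        fderiv ℝ φ (xb u, xb v) ((Pi.single j (1:ℝ) : V → ℝ) u, (Pi.single j (1:ℝ) : V → ℝ) v)
        = ∑ u : V, ∑ v ∈ G.neighborFinset u,
          ((if u = j then 1 else 0) * fderiv ℝ φ (xb u, xb v) (1, 0)
           + (if v = j then 1 else 0) * fderiv ℝ φ (xb u, xb v) (0, 1)) := by
      refine Finset.sum_congr rfl fun u _ => Finset.sum_congr rfl fun v _ => ?_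
      rw [hsingle, hsingle, hlin]
    rw [h1] at h0
    have h2 : ∑ u : V, ∑ v ∈ G.neighborFinset u,
        ((if u = j then 1 else 0) * fderiv ℝ φ (xb u, xb v) (1, 0)
         + (if v = j then 1 else 0) * fderiv ℝ φ (xb u, xb v) (0, 1))
        = (∑ v ∈ G.neighborFinset j, fderiv ℝ φ (xb j, xb v) (1, 0))
          + (∑ v ∈ G.neighborFinset j, fderiv ℝ φ (xb j, xb v) (1, 0)) := by
      rw [Finset.sum_congr rfl (fun u _ => Finset.sum_add_distrib),
        Finset.sum_add_distrib]
      congr 1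
      · -- first sum
        have : ∀ u : V, ∑ v ∈ G.neighborFinset u,
            (if u = j then 1 else 0) * fderiv ℝ φ (xb u, xb v) (1, 0)
            = if u = j then ∑ v ∈ G.neighborFinset u,
                fderiv ℝ φ (xb u, xb v) (1, 0) else 0 := by
          intro u
          by_cases h : u = j <;> simp [h]
        rw [Finset.sum_congr rfl (fun u _ => this u)]
        rw [Finset.sum_ite_eq' Finset.univ j
          (fun u => ∑ v ∈ G.neighborFinset u, fderiv ℝ φ (xb u, xb v) (1, 0))]
        simp
      · -- second sum
        have hin : ∀ u : V, ∑ v ∈ G.neighborFinset u,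
            (if v = j then 1 else 0) * fderiv ℝ φ (xb u, xb v) (0, 1)
            = if u ∈ G.neighborFinset j then fderiv ℝ φ (xb j, xb u) (1, 0) else 0 := by
          intro u
          have : ∑ v ∈ G.neighborFinset u,
              (if v = j then 1 else 0) * fderiv ℝ φ (xb u, xb v) (0, 1)
              = ∑ v ∈ G.neighborFinset u,
                (if v = j then fderiv ℝ φ (xb u, xb v) (0, 1) else 0) := by
            refine Finset.sum_congr rfl fun v _ => ?_
            by_cases h : v = j <;> simp [h]
          rw [this, Finset.sum_ite_eq' (G.neighborFinset u) j
            (fun v => fderiv ℝ φ (xb u, xb v) (0, 1))]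
          have hmem : j ∈ G.neighborFinset u ↔ u ∈ G.neighborFinset j := by
            simp [SimpleGraph.mem_neighborFinset, SimpleGraph.adj_comm]
          by_cases h : u ∈ G.neighborFinset j
          · rw [if_pos (hmem.mpr h), if_pos h, hswap]
          · rw [if_neg (fun hh => h (hmem.mp hh)), if_neg h]
        rw [Finset.sum_congr rfl (fun u _ => hin u)]
        rw [Finset.sum_ite_mem, Finset.univ_inter]
    rw [h2] at h0
    linarith
  -- properness
  have hadj : ∀ u v, G.Adj u v → xb u ≠ xb v := by
    intro u v huv heq
    have hS := hkey u
    have hc : fderiv ℝ φ (xb u, xb u) (1, 0) ≠ 0 := by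
      rcases hval u with h | h <;> rw [h] <;> assumption
    have hterm0 : ∀ w ∈ G.neighborFinset u,
        fderiv ℝ φ (xb u, xb w) (1, 0)
        = if xb w = xb u then fderiv ℝ φ (xb u, xb u) (1, 0) else 0 := by
      intro w _
      by_cases h : xb w = xb u
      · rw [if_pos h, h]
      · rw [if_neg h]
        rcases hval u with hu | hu <;> rcases hval w with hw | hw
        · exact absurd (hw.trans hu.symm) h
        · rw [hu, hw, hcrit]; rfl
        · rw [hu, hw, hswap, hcrit]; rfl
        · exact absurd (hw.trans hu.symm) h
    rw [Finset.sum_congr rfl hterm0, ← Finset.sum_filter,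
      Finset.sum_const, nsmul_eq_mul] at hS
    rcases mul_eq_zero.mp hS with h | h
    · have hv : v ∈ (G.neighborFinset u).filter (fun w => xb w = xb u) := by
        simp [SimpleGraph.mem_neighborFinset, huv, heq.symm]
      have : ((G.neighborFinset u).filter (fun w => xb w = xb u)).card ≠ 0 :=
        Finset.card_ne_zero_of_mem hv
      exact this (by exact_mod_cast h)
    · exact hc h
  refine ⟨hadj, ?_⟩
  refine ⟨SimpleGraph.Coloring.mk (fun v => if xb v = x₀ then 0 else 1) ?_⟩
  intro u v huv
  have hne := hadj u v huv
  rcases hval u with h1 | h1 <;> rcases hval v with h2 | h2 <;>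
    simp [h1, h2, hxy, Ne.symm hxy] at hne ⊢ <;> decide
end

section
/- Let n ≥ 3 be odd and suppose δ : [0, 1/2] → ℝ is strictly decreasing on [0,1/2], with δ(η) > 0 for all η ∈ [0, 1/2 − 1/(2n)). Let ξ, η satisfy 0 ≤ η < ξ ≤ 1/2, with (n−1)ξ + η an integer m satisfying 0 ≤ m < (n−1)/2. Then n·δ(1/2 − 1/(2n)) < (n−1)·δ(ξ) + δ(η). -/
/-- Let `n ≥ 3` be odd and `δ` strictly decreasing on `[0, 1/2]` with `δ(t) > 0`
for `t ∈ [0, 1/2 − 1/(2n))`. If `0 ≤ η < ξ ≤ 1/2` and `(n−1)ξ + η` is an integer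
`m` with `0 ≤ m < (n−1)/2`, then `n·δ(1/2 − 1/(2n)) < (n−1)·δ(ξ) + δ(η)`. -/
theorem stmt15 (n : ℕ) (hn : 3 ≤ n) (hodd : Odd n)
    (δ : ℝ → ℝ) (hanti : StrictAntiOn δ (Set.Icc 0 (1 / 2)))
    (hpos : ∀ t ∈ Set.Ico (0 : ℝ) (1 / 2 - 1 / (2 * n)), 0 < δ t)
    (ξ η : ℝ) (h0η : 0 ≤ η) (hηξ : η < ξ) (hξ : ξ ≤ 1 / 2)
    (m : ℤ) (hm : ((n : ℝ) - 1) * ξ + η = m)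
    (hm0 : 0 ≤ m) (hmlt : (m : ℝ) < ((n : ℝ) - 1) / 2) :
    (n : ℝ) * δ (1 / 2 - 1 / (2 * n)) < ((n : ℝ) - 1) * δ ξ + δ η := by
  obtain ⟨k, hk⟩ := hodd
  have hk1 : 1 ≤ k := by omega
  have hkr : (n : ℝ) = 2 * k + 1 := by
    rw [hk]; push_cast; ring
  have hkr1 : (1 : ℝ) ≤ k := by exact_mod_cast hk1
  -- m < k as integers
  have hmk : m ≤ (k : ℤ) - 1 := by
    have : (m : ℝ) < (k : ℝ) := by
      rw [hkr] at hmlt; linarith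
    have : m < (k : ℤ) := by exact_mod_cast this
    omega
  have hmkr : (m : ℝ) ≤ (k : ℝ) - 1 := by exact_mod_cast hmk
  -- ξ < 1/2 - 1/(2n)
  have hnpos : (0 : ℝ) < (n : ℝ) := by rw [hkr]; linarith
  have hξc : ξ < 1 / 2 - 1 / (2 * n) := by
    have h1 : ((n : ℝ) - 1) * ξ ≤ (k : ℝ) - 1 := by linarith
    rw [hkr] at h1 ⊢
    rw [div_sub_div _ _ (by norm_num : (2:ℝ) ≠ 0) (by positivity), lt_div_iff₀ (by positivity)]
    nlinarith
  have hc0 : (0 : ℝ) ≤ 1 / 2 - 1 / (2 * n) := by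
    rw [hkr]; rw [sub_nonneg, div_le_div_iff₀ (by positivity) (by norm_num)]; linarith
  have hcmem : (1 / 2 - 1 / (2 * (n:ℝ))) ∈ Set.Icc (0:ℝ) (1/2) := by
    constructor
    · exact hc0
    · have : (0:ℝ) < 1 / (2 * n) := by positivity
      linarith
  have hξmem : ξ ∈ Set.Icc (0:ℝ) (1/2) := ⟨le_trans h0η hηξ.le, hξ⟩
  have hηmem : η ∈ Set.Icc (0:ℝ) (1/2) := ⟨h0η, le_trans hηξ.le hξ⟩
  have h1 : δ (1 / 2 - 1 / (2 * n)) < δ ξ := hanti hξmem hcmem hξc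
  have h2 : δ ξ < δ η := hanti hηmem hξmem hηξ
  have hn1 : (1 : ℝ) ≤ (n : ℝ) - 1 := by rw [hkr]; linarith
  nlinarith [mul_lt_mul_of_pos_left h1 hnpos]
end
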